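/- Let d ≥ 2 be a natural number, c > 0, c' > 0, σ > 0 reals, and define f, g ∈ EuclideanSpace ℝ (Fin d) by f 0 = c'·(d−1)·Real.sqrt (1/(d·(d−1))), f j = −c'·Real.sqrt (1/(d·(d−1))) for j ≠ 0, and g 0 = c·(d−1)·Real.sqrt (1/(d·(d−1))), g j = −c·Real.sqrt (1/(d·(d−1))) for j ≠ 0. With π j = Equiv.swap 0 j for j : Fin d, set x j = Real.exp (⟪f, g ∘ π j⟫ / σ²) and x' j = Real.exp (⟪f + g, g ∘ π j⟫ / σ²). Then σ_{Z1}² := Real.log ((∑ j, (x j)²)/(∑ j, x j)² · (Real.exp (c²/σ²) − 1) + 1) equals Real.log ((1 + (d−1)·Real.exp (−2·d·c·c'/((d−1)·σ²))) / (1 + (d−1)·Real.exp (−d·c·c'/((d−1)·σ²)))² · (Real.exp (c²/σ²) − 1) + 1), and σ_{Z2}² := Real.log ((∑ j, (x' j)²)/(∑ j, x' j)² · (Real.exp (c²/σ²) − 1) + 1) equals Real.log ((1 + (d−1)·Real.exp (−2·d·c·(c+c')/((d−1)·σ²))) / (1 + (d−1)·Real.exp (−d·c·(c+c')/((d−1)·σ²)))²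 · (Real.exp (c²/σ²) − 1) + 1). -/

import Mathlib

/-! The worst-case vectors are multiples `a • v` of `v = (d - 1, -1, …, -1) / √(d (d - 1))`,
a unit vector orthogonal to `(1, …, 1)`, so `⟪a • v, π_j (b • v)⟫` is `a b` for `j = 0` and
`-a b / (d - 1)` otherwise. Each exponential sum therefore has one term `exp (t / σ²)` and `d - 1`
terms `exp (-t / ((d - 1) σ²))`; factoring out `exp (t / σ²)` gives the closed forms, with
`t = c c'` and `t = c (c + c')`. -/

open RealInnerProductSpace

/-- The coordinate-permuted copy of a vector: `(permVec π w) j = w (π j)`. -/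
def permVec {d : ℕ} (π : Equiv.Perm (Fin d)) (w : EuclideanSpace ℝ (Fin d)) :
    EuclideanSpace ℝ (Fin d) :=
  WithLp.toLp 2 (fun j => w (π j))

open Finset

lemma Fin.sum_ite_eq_zero {R : Type*} [Ring R] {d : ℕ} [NeZero d] (A B : R) :
    ∑ j : Fin d, (if j = 0 then A else B) = A + ((d : R) - 1) * B := by
  rw [sum_ite, filter_eq', filter_ne']
  simp [card_erase_of_mem, Nat.cast_sub (NeZero.one_le)]

lemma inner_permVec_swap_zero {d : ℕ} [NeZero d] {u w : EuclideanSpace ℝ (Fin d)}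
    {α β α' β' : ℝ} (hu : ∀ i, u i = if i = 0 then α else β)
    (hw : ∀ i, w i = if i = 0 then α' else β') (j : Fin d) :
    ⟪u, permVec (Equiv.swap 0 j) w⟫ = d * β * β' + (α - β) * β' + β * (α' - β')
      + if j = 0 then (α - β) * (α' - β') else 0 := by
  have hw_swap : ∀ i, w (Equiv.swap 0 j i) = if i = j then α' else β' := fun i => by
    simp only [hw, Equiv.swap_apply_eq_iff, Equiv.swap_apply_left]
  -- `u = β • 𝟙 + (α - β) • e₀` and `w ∘ swap 0 j = β' • 𝟙 + (α' - β') • e_j`, expanded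
  -- bilinearly
  have hprod : ∀ i, u i * w (Equiv.swap 0 j i) = β * β' + (if i = 0 then (α - β) * β' else 0)
      + (if i = j then β * (α' - β') else 0)
      + (if i = 0 then (if j = 0 then (α - β) * (α' - β') else 0) else 0) := fun i => by
    rw [hu, hw_swap]; split_ifs <;> simp_all <;> ring
  simp only [permVec, PiLp.inner_apply, RCLike.inner_apply, conj_trivial, mul_comm (w _), hprod,
    sum_add_distrib, sum_ite_eq', mem_univ, if_true, sum_const, card_univ, Fintype.card_fin,
    nsmul_eq_mul]
  ring

lemma inner_permVec_swap_zero_of_worstCase {d : ℕ} [NeZero d] (hd : 2 ≤ d) {a b : ℝ}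
    {u w : EuclideanSpace ℝ (Fin d)}
    (hu0 : u 0 = a * ((d : ℝ) - 1) * Real.sqrt (1 / ((d : ℝ) * ((d : ℝ) - 1))))
    (huj : ∀ j : Fin d, j ≠ 0 → u j = -a * Real.sqrt (1 / ((d : ℝ) * ((d : ℝ) - 1))))
    (hw0 : w 0 = b * ((d : ℝ) - 1) * Real.sqrt (1 / ((d : ℝ) * ((d : ℝ) - 1))))
    (hwj : ∀ j : Fin d, j ≠ 0 → w j = -b * Real.sqrt (1 / ((d : ℝ) * ((d : ℝ) - 1))))
    (j : Fin d) :
    ⟪u, permVec (Equiv.swap 0 j) w⟫ = if j = 0 then a * b else -(a * b) / ((d : ℝ) - 1) := by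
  set s := Real.sqrt (1 / ((d : ℝ) * ((d : ℝ) - 1)))
  have hd1 : 0 < (d : ℝ) - 1 := by
    have : (2 : ℝ) ≤ d := by exact_mod_cast hd
    linarith
  have hs : s ^ 2 * ((d : ℝ) * ((d : ℝ) - 1)) = 1 := by
    rw [Real.sq_sqrt (by positivity), one_div_mul_cancel (by positivity)]
  rw [inner_permVec_swap_zero (fun i => by split_ifs with h; exacts [h ▸ hu0, huj i h])
    (fun i => by split_ifs with h; exacts [h ▸ hw0, hwj i h])]
  split_ifs
  · linear_combination a * b * hs
  · rw [eq_div_iff hd1.ne']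
    linear_combination -(a * b) * hs

open Real in
lemma sum_exp_sq_div_sq_sum_exp_of_ite {d : ℕ} [NeZero d] (hd : 2 ≤ d) (s t : ℝ)
    {F : Fin d → ℝ} (hF : ∀ j, F j = if j = 0 then t else -t / ((d : ℝ) - 1)) :
    (∑ j, exp (F j / s) ^ 2) / (∑ j, exp (F j / s)) ^ 2
      = (1 + ((d : ℝ) - 1) * exp (-2 * d * t / (((d : ℝ) - 1) * s)))
        / (1 + ((d : ℝ) - 1) * exp (-d * t / (((d : ℝ) - 1) * s))) ^ 2 := by
  have hd1 : (d : ℝ) - 1 ≠ 0 := by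
    have : (2 : ℝ) ≤ d := by exact_mod_cast hd
    linarith
  set r := exp (-d * t / (((d : ℝ) - 1) * s))
  have hexp : ∀ j, exp (F j / s) = exp (t / s) * if j = 0 then 1 else r := fun j => by
    rw [hF]
    split_ifs
    · rw [mul_one]
    · rw [← exp_add, ← div_div]
      congr 1
      linear_combination (t / s) * (mul_inv_cancel₀ hd1)
  have hr : r ^ 2 = exp (-2 * d * t / (((d : ℝ) - 1) * s)) := by
    rw [sq, ← exp_add]
    congr 1
    ring
  simp_rw [hexp, mul_pow, ← mul_sum, ite_pow, one_pow, Fin.sum_ite_eq_zero, hr, mul_pow]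
  exact mul_div_mul_left _ _ (pow_ne_zero 2 (exp_pos _).ne')

theorem surrogate_variance_closed_forms_general {d : ℕ} [NeZero d] (hd : 2 ≤ d) {c c' σ : ℝ}
    (f g : EuclideanSpace ℝ (Fin d))
    (hf0 : f 0 = c' * ((d : ℝ) - 1) * Real.sqrt (1 / ((d : ℝ) * ((d : ℝ) - 1))))
    (hfj : ∀ j : Fin d, j ≠ 0 → f j = -c' * Real.sqrt (1 / ((d : ℝ) * ((d : ℝ) - 1))))
    (hg0 : g 0 = c * ((d : ℝ) - 1) * Real.sqrt (1 / ((d : ℝ) * ((d : ℝ) - 1))))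
    (hgj : ∀ j : Fin d, j ≠ 0 → g j = -c * Real.sqrt (1 / ((d : ℝ) * ((d : ℝ) - 1)))) :
    (Real.log
        ((∑ j : Fin d, (Real.exp (⟪f, permVec (Equiv.swap 0 j) g⟫ / σ ^ 2)) ^ 2)
            / (∑ j : Fin d, Real.exp (⟪f, permVec (Equiv.swap 0 j) g⟫ / σ ^ 2)) ^ 2
          * (Real.exp (c ^ 2 / σ ^ 2) - 1) + 1)
      = Real.log
          ((1 + ((d : ℝ) - 1) * Real.exp (-2 * (d : ℝ) * c * c' / (((d : ℝ) - 1) * σ ^ 2)))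
              / (1 + ((d : ℝ) - 1) *
                  Real.exp (-(d : ℝ) * c * c' / (((d : ℝ) - 1) * σ ^ 2))) ^ 2
            * (Real.exp (c ^ 2 / σ ^ 2) - 1) + 1)) ∧
    (Real.log
        ((∑ j : Fin d, (Real.exp (⟪f + g, permVec (Equiv.swap 0 j) g⟫ / σ ^ 2)) ^ 2)
            / (∑ j : Fin d, Real.exp (⟪f + g, permVec (Equiv.swap 0 j) g⟫ / σ ^ 2)) ^ 2
          * (Real.exp (c ^ 2 / σ ^ 2) - 1) + 1)
      = Real.log
          ((1 + ((d : ℝ) - 1) *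
                Real.exp (-2 * (d : ℝ) * c * (c + c') / (((d : ℝ) - 1) * σ ^ 2)))
              / (1 + ((d : ℝ) - 1) *
                  Real.exp (-(d : ℝ) * c * (c + c') / (((d : ℝ) - 1) * σ ^ 2))) ^ 2
            * (Real.exp (c ^ 2 / σ ^ 2) - 1) + 1)) := by
  have hfg0 :
      (f + g) 0 = (c' + c) * ((d : ℝ) - 1) * Real.sqrt (1 / ((d : ℝ) * ((d : ℝ) - 1))) := by
    rw [PiLp.add_apply, hf0, hg0]; ring
  have hfgj : ∀ j : Fin d, j ≠ 0 →
      (f + g) j = -(c' + c) * Real.sqrt (1 / ((d : ℝ) * ((d : ℝ) - 1))) := fun j hj => by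
    rw [PiLp.add_apply, hfj j hj, hgj j hj]; ring
  rw [sum_exp_sq_div_sq_sum_exp_of_ite hd _ _
      (inner_permVec_swap_zero_of_worstCase hd hf0 hfj hg0 hgj),
    sum_exp_sq_div_sq_sum_exp_of_ite hd _ _
      (inner_permVec_swap_zero_of_worstCase hd hfg0 hfgj hg0 hgj)]
  constructor <;> ring_nf

/-- **Closed forms of the surrogate variances at the worst case.** With the worst-case vectors
`f, g` and transpositions `π j = swap 0 j`, the Fenton–Wilkinson surrogate variances
`σ_{Z1}²` and `σ_{Z2}²` take the closed forms of Eq. (12) in Theorem 3. -/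
theorem surrogate_variance_closed_forms {d : ℕ} [NeZero d] (hd : 2 ≤ d) {c c' σ : ℝ}
    (hc : 0 < c) (hc' : 0 < c') (hσ : 0 < σ) (f g : EuclideanSpace ℝ (Fin d))
    (hf0 : f 0 = c' * ((d : ℝ) - 1) * Real.sqrt (1 / ((d : ℝ) * ((d : ℝ) - 1))))
    (hfj : ∀ j : Fin d, j ≠ 0 → f j = -c' * Real.sqrt (1 / ((d : ℝ) * ((d : ℝ) - 1))))
    (hg0 : g 0 = c * ((d : ℝ) - 1) * Real.sqrt (1 / ((d : ℝ) * ((d : ℝ) - 1))))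
    (hgj : ∀ j : Fin d, j ≠ 0 → g j = -c * Real.sqrt (1 / ((d : ℝ) * ((d : ℝ) - 1)))) :
    (Real.log
        ((∑ j : Fin d, (Real.exp (⟪f, permVec (Equiv.swap 0 j) g⟫ / σ ^ 2)) ^ 2)
            / (∑ j : Fin d, Real.exp (⟪f, permVec (Equiv.swap 0 j) g⟫ / σ ^ 2)) ^ 2
          * (Real.exp (c ^ 2 / σ ^ 2) - 1) + 1)
      = Real.log
          ((1 + ((d : ℝ) - 1) * Real.exp (-2 * (d : ℝ) * c * c' / (((d : ℝ) - 1) * σ ^ 2)))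
              / (1 + ((d : ℝ) - 1) *
                  Real.exp (-(d : ℝ) * c * c' / (((d : ℝ) - 1) * σ ^ 2))) ^ 2
            * (Real.exp (c ^ 2 / σ ^ 2) - 1) + 1)) ∧
    (Real.log
        ((∑ j : Fin d, (Real.exp (⟪f + g, permVec (Equiv.swap 0 j) g⟫ / σ ^ 2)) ^ 2)
            / (∑ j : Fin d, Real.exp (⟪f + g, permVec (Equiv.swap 0 j) g⟫ / σ ^ 2)) ^ 2
          * (Real.exp (c ^ 2 / σ ^ 2) - 1) + 1)
      = Real.log
          ((1 + ((d : ℝ) - 1) *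
                Real.exp (-2 * (d : ℝ) * c * (c + c') / (((d : ℝ) - 1) * σ ^ 2)))
              / (1 + ((d : ℝ) - 1) *
                  Real.exp (-(d : ℝ) * c * (c + c') / (((d : ℝ) - 1) * σ ^ 2))) ^ 2
            * (Real.exp (c ^ 2 / σ ^ 2) - 1) + 1)) :=
  surrogate_variance_closed_forms_general hd f g hf0 hfj hg0 hgj
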